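/- List-scheduling greedy lower bound: let L : Fin N → ℝ be the final machine loads produced by the greedy algorithm on a list of nonnegative weights w_1, …, w_F. Then the minimum final load satisfies min_{j} L j ≥ (∑_{i} w_i)/N − max_{i} w_i. -/
import Mathlib


open Finset

/-- The machine of minimal current load, ties broken by lowest machine index. -/
noncomputable def minIdx {N : ℕ} [NeZero N] (loads : Fin N → ℝ) : Fin N :=
  (Finset.univ.filter fun j => ∀ i, loads j ≤ loads i).min' (by
    classical
    obtain ⟨j, -, hj⟩ := Finset.exists_min_image (Finset.univ : Finset (Fin N)) loads
      Finset.univ_nonempty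
    exact ⟨j, Finset.mem_filter.mpr ⟨Finset.mem_univ j, fun i => hj i (Finset.mem_univ i)⟩⟩)

/-- Final machine loads of the list-scheduling greedy algorithm: process the
weights in list order, starting from all-zero loads, each time adding the weight
to a machine of minimal current cumulative load (lowest index on ties). -/
noncomputable def greedyLoads (N : ℕ) [NeZero N] (ws : List ℝ) : Fin N → ℝ :=
  ws.foldl
    (fun loads w => Function.update loads (minIdx loads) (loads (minIdx loads) + w))
    (fun _ => 0)

lemma minIdx_le {N : ℕ} [NeZero N] (loads : Fin N → ℝ) (i : Fin N) :
    loads (minIdx loads) ≤ loads i := by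
  have h : minIdx loads ∈ Finset.univ.filter fun j => ∀ i, loads j ≤ loads i :=
    Finset.min'_mem _ _
  exact (Finset.mem_filter.mp h).2 i

lemma sum_foldl {N : ℕ} [NeZero N] (ws : List ℝ) (loads : Fin N → ℝ) :
    ∑ j, (ws.foldl
      (fun loads w => Function.update loads (minIdx loads) (loads (minIdx loads) + w))
      loads) j = ∑ j, loads j + ws.sum := by
  induction ws generalizing loads with
  | nil => simp
  | cons w ws ih =>
    simp only [List.foldl_cons, List.sum_cons]
    rw [ih]
    have h1 : ∑ j, Function.update loads (minIdx loads) (loads (minIdx loads) + w) j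
        = ∑ j, loads j + w := by
      rw [Finset.sum_update_of_mem (Finset.mem_univ _)]
      have h2 := Finset.add_sum_erase Finset.univ loads (Finset.mem_univ (minIdx loads))
      rw [Finset.sdiff_singleton_eq_erase]
      linarith
    rw [h1]; ring

lemma invariant {N : ℕ} [NeZero N] (M : ℝ) (hM : 0 ≤ M) (ws : List ℝ)
    (hws : ∀ w ∈ ws, 0 ≤ w ∧ w ≤ M)
    (loads : Fin N → ℝ) (h : ∀ j i, loads j ≤ loads i + M) :
    ∀ j i, (ws.foldl
      (fun loads w => Function.update loads (minIdx loads) (loads (minIdx loads) + w))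
      loads) j ≤ (ws.foldl
      (fun loads w => Function.update loads (minIdx loads) (loads (minIdx loads) + w))
      loads) i + M := by
  induction ws generalizing loads with
  | nil => exact h
  | cons w ws ih =>
    simp only [List.foldl_cons]
    obtain ⟨hw0, hwM⟩ := hws w (by simp)
    apply ih (fun w hw => hws w (by simp [hw]))
    intro j i
    set k := minIdx loads with hk
    have hmin : ∀ i, loads k ≤ loads i := minIdx_le loads
    by_cases hj : j = k
    · by_cases hi : i = k
      · subst hj; subst hi; linarith
      · subst hj
        rw [Function.update_self, Function.update_of_ne hi]
        have := hmin i
        linarith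
    · rw [Function.update_of_ne hj]
      by_cases hi : i = k
      · subst hi
        rw [Function.update_self]
        have := h j k
        linarith
      · rw [Function.update_of_ne hi]
        exact h j i

lemma le_foldr_max (ws : List ℝ) (w : ℝ) (hw : w ∈ ws) : w ≤ ws.foldr max 0 := by
  induction ws with
  | nil => simp at hw
  | cons a ws ih =>
    simp only [List.foldr_cons]
    rcases List.mem_cons.mp hw with h | h
    · subst h; exact le_max_left _ _
    · exact le_trans (ih h) (le_max_right _ _)

lemma foldr_max_nonneg (ws : List ℝ) : 0 ≤ ws.foldr max 0 := by
  induction ws with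
  | nil => simp
  | cons a ws ih => exact le_trans ih (by simp [List.foldr_cons, le_max_right])

/-- greedy lower bound `min_j L j ≥ (∑ w)/N − max_i w_i`
(the max weight read as `0` for the empty list). -/
theorem greedy_min_load_ge (N : ℕ) [NeZero N] (ws : List ℝ)
    (hw : ∀ w ∈ ws, 0 ≤ w) :
    Finset.univ.inf' Finset.univ_nonempty (greedyLoads N ws) ≥
      ws.sum / (N : ℝ) - ws.foldr max 0 := by
  set M := ws.foldr max 0 with hMdef
  have hM : 0 ≤ M := foldr_max_nonneg ws
  set L := greedyLoads N ws with hL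
  have hinv : ∀ j i, L j ≤ L i + M := by
    apply invariant M hM ws (fun w hw' => ⟨hw w hw', le_foldr_max ws w hw'⟩)
    intro j i; simpa using hM
  have hsum : ∑ j, L j = ws.sum := by
    have := sum_foldl (N := N) ws (fun _ => 0)
    simpa [hL, greedyLoads] using this
  obtain ⟨i, -, hi⟩ := Finset.exists_mem_eq_inf' (Finset.univ_nonempty (α := Fin N)) L
  have hNpos : (0 : ℝ) < N := by
    exact_mod_cast Nat.pos_of_ne_zero (NeZero.ne N)
  have hbound : ws.sum ≤ N * (Finset.univ.inf' Finset.univ_nonempty L + M) := by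
    rw [← hsum]
    calc ∑ j, L j ≤ ∑ _j : Fin N, (L i + M) := Finset.sum_le_sum fun j _ => by
          have := hinv j i; linarith
      _ = N * (L i + M) := by simp [Finset.sum_const, Finset.card_univ]; ring
      _ = N * (Finset.univ.inf' Finset.univ_nonempty L + M) := by rw [← hi]
  rw [ge_iff_le, sub_le_iff_le_add, div_le_iff₀ hNpos]
  nlinarith [hbound]
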